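/- Let 0 < p, q < 1. Denote the generators of P(D_p) by x, x* and of P(D_q) by y, y*, and let φ_p : P(D_p) → ℂ[a, a⁻¹] and φ_q : P(D_q) → ℂ[a, a⁻¹] be the unique unital algebra homomorphisms with φ_p(x) = a, φ_p(x*) = a⁻¹, φ_q(y) = a, φ_q(y*) = a⁻¹. Then the unique unital algebra homomorphism F : P(S²_{pqφ}) → P(D_p) × P(D_q) with F(f₁) = (x, y), F(f₋₁) = (x*, y*), F(f₀) = (x x*, 1) is injective, and its image equals the fibered product P(D_p) ⊕_φ P(D_q) = { (f, g) ∈ P(D_p) × P(D_q) : φ_p(f) = φ_q(g) }. In particular, P(S²_{pqφ}) is isomorphic as an algebra to P(D_p) ⊕_φ P(D_q). -/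

import Mathlib

noncomputable section

/-- The free algebra ℂ⟨x, x*⟩ on two generators (generator 0 is `x`, generator 1 is `x*`). -/
abbrev FreeDisc : Type := FreeAlgebra ℂ (Fin 2)

/-- The defining relation of the quantum disc: x* x = q x x* + (1 - q)·1. -/
def discRel (q : ℝ) : FreeDisc → FreeDisc → Prop := fun a b =>
  a = FreeAlgebra.ι ℂ (1 : Fin 2) * FreeAlgebra.ι ℂ (0 : Fin 2) ∧
  b = (q : ℂ) • (FreeAlgebra.ι ℂ (0 : Fin 2) * FreeAlgebra.ι ℂ (1 : Fin 2)) +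
      ((1 : ℂ) - (q : ℂ)) • 1

/-- The polynomial quantum disc algebra P(D_q). -/
abbrev QDisc (q : ℝ) : Type := RingQuot (discRel q)

/-- The generator x of P(D_q). -/
def xq (q : ℝ) : QDisc q := RingQuot.mkAlgHom ℂ (discRel q) (FreeAlgebra.ι ℂ 0)

/-- The generator x* of P(D_q). -/
def xsq (q : ℝ) : QDisc q := RingQuot.mkAlgHom ℂ (discRel q) (FreeAlgebra.ι ℂ 1)

/-- The free algebra ℂ⟨f₁, f₋₁, f₀⟩ (generator 0 is f₁, generator 1 is f₋₁,
generator 2 is f₀). -/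
abbrev FreeSphere : Type := FreeAlgebra ℂ (Fin 3)

/-- f₁ in the free algebra. -/
def F1 : FreeSphere := FreeAlgebra.ι ℂ 0
/-- f₋₁ in the free algebra. -/
def Fm1 : FreeSphere := FreeAlgebra.ι ℂ 1
/-- f₀ in the free algebra. -/
def F0 : FreeSphere := FreeAlgebra.ι ℂ 2

/-- The defining relations of P(S²_{pqφ}). -/
inductive sphereRel (p q : ℝ) : FreeSphere → FreeSphere → Prop
  | rel1 : sphereRel p q (Fm1 * F1)
      ((q : ℂ) • (F1 * Fm1) + ((p : ℂ) - (q : ℂ)) • F0 + ((1 : ℂ) - (p : ℂ)) • 1)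
  | rel2 : sphereRel p q (F0 * F1) ((p : ℂ) • (F1 * F0) + ((1 : ℂ) - (p : ℂ)) • F1)
  | rel3 : sphereRel p q (Fm1 * F0) ((p : ℂ) • (F0 * Fm1) + ((1 : ℂ) - (p : ℂ)) • Fm1)
  | rel4 : sphereRel p q ((1 - F0) * (F1 * Fm1 - F0)) 0

/-- The polynomial algebra P(S²_{pqφ}). -/
abbrev QSphere (p q : ℝ) : Type := RingQuot (sphereRel p q)

/-- The generator f₁ of P(S²_{pqφ}). -/
def f1 (p q : ℝ) : QSphere p q := RingQuot.mkAlgHom ℂ (sphereRel p q) F1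
/-- The generator f₋₁ of P(S²_{pqφ}). -/
def fm1 (p q : ℝ) : QSphere p q := RingQuot.mkAlgHom ℂ (sphereRel p q) Fm1
/-- The generator f₀ of P(S²_{pqφ}). -/
def f0 (p q : ℝ) : QSphere p q := RingQuot.mkAlgHom ℂ (sphereRel p q) F0

/-!
Using the relations, `P(S²_{pqφ})` is spanned by the monomials `f₁^a f₀^b f₋₁^c` with one of
`a, b, c` zero; the key reduction is that `f₀` commutes with `f₁ f₋₁` and hence, by the fourth
relation, fixes `f₁ f₋₁ - f₀`. The images `(x^a (x x*)^b x*^c, y^a y*^c)` of these monomials are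
linearly independent: those with `a, c > 0` (so `b = 0`) are separated by the second factor, the
others by the first. Both independence statements are read off from matrix coefficients of the
Fock representation `x e_k = e_{k+1}`, `x* e_k = (1 - t^k) e_{k-1}`, where `0 < t < 1` makes the
numbers `1 - t^k` (`k > 0`) nonzero and pairwise distinct.

The first component of `F` is onto, and `F (f₀ - f₁ f₋₁) = (0, 1 - y y*)`. Modulo the elements
`u (1 - y y*) v`, `P(D_q)` is spanned by lifts of the Laurent monomials, which `φ_q` maps to a
basis; so `(0, k)` lies in the image whenever `φ_q k = 0`, and `(f, g) = F z + (0, g - (F z).2)`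
for any `z` with `(F z).1 = f`.
-/

section

variable {R A : Type*} [CommSemiring R] [Semiring A] [Algebra R A]

theorem Submodule.eq_top_of_one_mem_of_mul_mem {s : Set A} (hs : Algebra.adjoin R s = ⊤)
    {M : Submodule R A} (h1 : 1 ∈ M) (hmul : ∀ m ∈ M, ∀ a ∈ s, m * a ∈ M) : M = ⊤ := by
  rw [eq_top_iff, ← Algebra.top_toSubmodule, ← hs, Algebra.adjoin_eq_span, Submodule.span_le]
  intro x hx
  induction hx using Submonoid.closure_induction_right with
  | one => exact h1
  | mul_right m _ a ha hm => exact hmul m hm a ha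

theorem Submodule.mul_mul_mem_of_mem_span {s : Set A} {M : Submodule R A} {u v : A}
    (h : ∀ z ∈ s, u * z * v ∈ M) {z : A} (hz : z ∈ Submodule.span R s) : u * z * v ∈ M := by
  have : Submodule.span R s ≤ M.comap (LinearMap.mulLeft R u ∘ₗ LinearMap.mulRight R v) :=
    Submodule.span_le.mpr fun z hz => by simpa [mul_assoc] using h z hz
  simpa [mul_assoc] using this hz

theorem RingQuot.adjoin_range_mkAlgHom_ι {X : Type*}
    (r : FreeAlgebra R X → FreeAlgebra R X → Prop) :
    Algebra.adjoin R (Set.range fun i => RingQuot.mkAlgHom R r (FreeAlgebra.ι R i)) = ⊤ := by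
  rw [Set.range_comp' (RingQuot.mkAlgHom R r) (FreeAlgebra.ι R), ← AlgHom.map_adjoin,
    FreeAlgebra.adjoin_range_ι, Algebra.map_top, AlgHom.range_eq_top]
  exact RingQuot.mkAlgHom_surjective R r

theorem AlgHom.surjective_of_adjoin_eq_top {B : Type*} [Semiring B] [Algebra R B]
    {s : Set B} (hs : Algebra.adjoin R s = ⊤) (f : A →ₐ[R] B) (h : s ⊆ Set.range f) :
    Function.Surjective f := by
  rw [← AlgHom.range_eq_top, eq_top_iff, ← hs]
  exact Algebra.adjoin_le h

theorem Algebra.mem_span_range_pow_of_mem_adjoin_singleton {x z : A}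
    (hz : z ∈ Algebra.adjoin R {x}) :
    z ∈ Submodule.span R (Set.range (x ^ · : ℕ → A)) := by
  rwa [← Submonoid.coe_powers, Submonoid.powers_eq_closure, ← Algebra.adjoin_eq_span]

end

section

variable {R M N₁ N₂ : Type*} [Ring R] [AddCommGroup M] [AddCommGroup N₁] [AddCommGroup N₂]
  [Module R M] [Module R N₁] [Module R N₂]

theorem LinearMap.ker_inf_ker_eq_bot_of_sup_eq_top {f : M →ₗ[R] N₁} {g : M →ₗ[R] N₂}
    {U W : Submodule R M} (hUW : U ⊔ W = ⊤) (hU : Disjoint U (LinearMap.ker g))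
    (hgUW : Disjoint (U.map g) (W.map g)) (hW : Disjoint W (LinearMap.ker f)) :
    LinearMap.ker f ⊓ LinearMap.ker g = ⊥ := by
  rw [eq_bot_iff]
  rintro z ⟨hfz, hgz⟩
  obtain ⟨u, hu, w, hw, rfl⟩ := Submodule.mem_sup.mp (hUW ▸ Submodule.mem_top : z ∈ U ⊔ W)
  rw [SetLike.mem_coe, LinearMap.mem_ker, map_add] at hfz hgz
  have hgu : g u = 0 := by
    refine Submodule.disjoint_def.mp hgUW _ ⟨u, hu, rfl⟩ ?_
    rw [eq_neg_of_add_eq_zero_left hgz]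
    exact Submodule.neg_mem _ ⟨w, hw, rfl⟩
  obtain rfl : u = 0 := Submodule.disjoint_def.mp hU u hu hgu
  rw [map_zero, zero_add] at hfz
  rw [zero_add]
  exact Submodule.disjoint_def.mp hW w hw hfz

theorem Submodule.disjoint_span_image_ker {ι : Type*} {v : ι → M} {s : Set ι} {f : M →ₗ[R] N₁}
    (h : LinearIndepOn R (f ∘ v) s) : Disjoint (Submodule.span R (v '' s)) (LinearMap.ker f) := by
  rw [Set.image_eq_range]
  exact Submodule.range_ker_disjoint h

end

theorem Polynomial.eq_zero_of_eval_one_sub_pow_eq_zero {t : ℝ} (ht0 : 0 < t) (ht1 : t < 1)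
    {P : Polynomial ℂ} (K : ℕ) (h : ∀ m ≥ K, P.eval (1 - (t : ℂ) ^ m) = 0) : P = 0 := by
  refine P.eq_zero_of_infinite_isRoot <| Set.infinite_of_injective_forall_mem
    (f := fun m : ℕ => 1 - (t : ℂ) ^ (m + K)) ?_ fun m => h _ (Nat.le_add_left K m)
  intro m n hmn
  have : t ^ (m + K) = t ^ (n + K) := by exact_mod_cast sub_right_injective hmn
  simpa using pow_right_injective₀ ht0 ht1.ne this

namespace QDisc

variable (t : ℝ)

open LaurentPolynomial

theorem xsq_mul_xq : xsq t * xq t = (t : ℂ) • (xq t * xsq t) + (1 - (t : ℂ)) • 1 := by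
  simpa only [map_mul, map_add, map_smul, map_one, xq, xsq] using
    RingQuot.mkAlgHom_rel ℂ (s := discRel t) ⟨rfl, rfl⟩

theorem adjoin_eq_top : Algebra.adjoin ℂ {xq t, xsq t} = ⊤ := by
  convert RingQuot.adjoin_range_mkAlgHom_ι (R := ℂ) (discRel t)
  ext
  simp [Fin.exists_fin_two, xq, xsq, eq_comm]

def laurentMonomial : ℤ → QDisc t
  | .ofNat m => xq t ^ m
  | .negSucc m => xsq t ^ (m + 1)

theorem xsq_pow_mem_range (m : ℕ) : xsq t ^ m ∈ Set.range (laurentMonomial t) := by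
  rcases m with _ | m
  · exact ⟨.ofNat 0, by rw [laurentMonomial, pow_zero, pow_zero]⟩
  · exact ⟨.negSucc m, rfl⟩

theorem map_laurentMonomial (φ : QDisc t →ₐ[ℂ] LaurentPolynomial ℂ) (h1 : φ (xq t) = T 1)
    (h2 : φ (xsq t) = T (-1)) (n : ℤ) : φ (laurentMonomial t n) = T n := by
  rcases n with m | m
  · simp [laurentMonomial, h1, T_pow]
  · simp [laurentMonomial, h2, T_pow, Int.negSucc_eq]

def fockShift : Module.End ℂ (ℕ →₀ ℂ) := Finsupp.lmapDomain ℂ ℂ (· + 1)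

/-- The truncated `0 - 1 = 0` is harmless: the weight `1 - t^0` vanishes. -/
def fockLower : Module.End ℂ (ℕ →₀ ℂ) :=
  Finsupp.lsum ℂ fun k => (1 - (t : ℂ) ^ k) • Finsupp.lsingle (k - 1)

theorem fockShift_single (k : ℕ) (b : ℂ) :
    fockShift (Finsupp.single k b) = Finsupp.single (k + 1) b := by
  simp [fockShift]

theorem fockLower_single (k : ℕ) (b : ℂ) :
    fockLower t (Finsupp.single k b) = (1 - (t : ℂ) ^ k) • Finsupp.single (k - 1) b := by
  simp [fockLower]

theorem fockLower_mul_fockShift :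
    fockLower t * fockShift = (t : ℂ) • (fockShift * fockLower t) + (1 - (t : ℂ)) • 1 := by
  refine Finsupp.lhom_ext fun k b => ?_
  cases k with
  | zero => simp [fockShift_single, fockLower_single]
  | succ k =>
    simp only [Module.End.mul_apply, LinearMap.add_apply, LinearMap.smul_apply,
      Module.End.one_apply, fockShift_single, fockLower_single, map_smul, smul_smul,
      Nat.add_sub_cancel, ← add_smul]
    congr 1
    ring

def fock : QDisc t →ₐ[ℂ] Module.End ℂ (ℕ →₀ ℂ) :=
  RingQuot.liftAlgHom ℂ ⟨FreeAlgebra.lift ℂ ![fockShift, fockLower t], by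
    rintro _ _ ⟨rfl, rfl⟩
    simp only [map_add, map_mul, map_smul, FreeAlgebra.lift_ι_apply, map_one]
    exact fockLower_mul_fockShift t⟩

theorem fock_xq : fock t (xq t) = fockShift := by
  simp [fock, xq]

theorem fock_xsq : fock t (xsq t) = fockLower t := by
  simp [fock, xsq]

theorem fockShift_pow_single (a k : ℕ) (b : ℂ) :
    (fockShift ^ a) (Finsupp.single k b) = Finsupp.single (k + a) b := by
  induction a with
  | zero => simp
  | succ a ih => rw [pow_succ', Module.End.mul_apply, ih, fockShift_single, Nat.add_assoc]

theorem fockLower_pow_single (c k : ℕ) (b : ℂ) :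
    (fockLower t ^ c) (Finsupp.single k b) =
      (∏ j ∈ Finset.range c, (1 - (t : ℂ) ^ (k - j))) • Finsupp.single (k - c) b := by
  induction c with
  | zero => simp
  | succ c ih =>
    rw [pow_succ', Module.End.mul_apply, ih, map_smul, fockLower_single, smul_smul,
      Finset.prod_range_succ, Nat.sub_sub, mul_comm]

theorem fockShift_mul_fockLower_pow_single (n k : ℕ) (b : ℂ) :
    ((fockShift * fockLower t) ^ n) (Finsupp.single k b) =
      (1 - (t : ℂ) ^ k) ^ n • Finsupp.single k b := by
  have hstep : (fockShift * fockLower t) (Finsupp.single k b) =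
      (1 - (t : ℂ) ^ k) • Finsupp.single k b := by
    rw [Module.End.mul_apply, fockLower_single, map_smul, fockShift_single]
    rcases k with _ | k <;> simp
  induction n with
  | zero => simp
  | succ n ih => rw [pow_succ, Module.End.mul_apply, hstep, map_smul, ih, smul_smul, pow_succ']

def discMonomial (i : ℕ × ℕ × ℕ) : QDisc t :=
  xq t ^ i.1 * (xq t * xsq t) ^ i.2.1 * xsq t ^ i.2.2

def fockWeight (b c k : ℕ) : ℂ :=
  (∏ j ∈ Finset.range c, (1 - (t : ℂ) ^ (k - j))) * (1 - (t : ℂ) ^ (k - c)) ^ b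

/-- The matrix coefficient `⟨e_n, fock t z e_k⟩`. -/
def fockCoeff (k n : ℕ) : QDisc t →ₗ[ℂ] ℂ :=
  Finsupp.lapply n ∘ₗ LinearMap.applyₗ (Finsupp.single k 1) ∘ₗ (fock t).toLinearMap

theorem fockCoeff_discMonomial (k n : ℕ) (i : ℕ × ℕ × ℕ) :
    fockCoeff t k n (discMonomial t i) =
      if k - i.2.2 + i.1 = n then fockWeight t i.2.1 i.2.2 k else 0 := by
  change fock t (discMonomial t i) (Finsupp.single k 1) n = _
  simp only [discMonomial, map_mul, map_pow, Module.End.mul_apply, fock_xq, fock_xsq,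
    fockLower_pow_single, map_smul, fockShift_mul_fockLower_pow_single, fockShift_pow_single,
    smul_smul, Finsupp.smul_apply, Finsupp.single_apply, smul_eq_mul, mul_ite, mul_one, mul_zero,
    fockWeight]

theorem fockWeight_eq_zero_of_lt {b c k : ℕ} (h : k < c) : fockWeight t b c k = 0 := by
  refine mul_eq_zero_of_left (Finset.prod_eq_zero (Finset.mem_range.mpr h) ?_) _
  simp

variable {t}

theorem prod_one_sub_pow_ne_zero (ht0 : 0 < t) (ht1 : t < 1) {c k : ℕ} (h : c ≤ k) :
    ∏ j ∈ Finset.range c, (1 - (t : ℂ) ^ (k - j)) ≠ 0 := by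
  refine Finset.prod_ne_zero_iff.mpr fun j hj => sub_ne_zero.mpr fun h1 => ?_
  have : t ^ (k - j) < 1 := pow_lt_one₀ ht0.le ht1 (by rw [Finset.mem_range] at hj; omega)
  exact this.ne (by exact_mod_cast h1.symm)

theorem fockCoeff_linearCombination (k n : ℕ) (l : ℕ × ℕ × ℕ →₀ ℂ) :
    fockCoeff t k n (Finsupp.linearCombination ℂ (discMonomial t) l) =
      ∑ i ∈ l.support, l i * if k - i.2.2 + i.1 = n then fockWeight t i.2.1 i.2.2 k else 0 := by
  simp only [Finsupp.linearCombination_apply, Finsupp.sum, map_sum, map_smul,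
    fockCoeff_discMonomial, smul_eq_mul]

/-- If `x^a x*^c` is the term of a vanishing combination with least `c`, then it is the only term
contributing to `⟨e_a, z e_c⟩`. -/
theorem linearIndepOn_discMonomial_middle_zero (ht0 : 0 < t) (ht1 : t < 1) :
    LinearIndepOn ℂ (discMonomial t) {i | i.2.1 = 0} := by
  rw [linearIndepOn_iff]
  intro l hl hsum
  by_contra hne
  obtain ⟨⟨a, b, c⟩, hi₀, hmin⟩ :=
    l.support.exists_min_image (·.2.2) (Finsupp.support_nonempty_iff.mpr hne)
  have hb : b = 0 := hl hi₀
  subst hb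
  have key := congrArg (fockCoeff t c a) hsum
  rw [fockCoeff_linearCombination, map_zero, Finset.sum_eq_single_of_mem _ hi₀] at key
  · simp only [Nat.sub_self, zero_add, if_true, fockWeight, pow_zero, mul_one] at key
    exact mul_ne_zero (Finsupp.mem_support_iff.mp hi₀)
      (prod_one_sub_pow_ne_zero ht0 ht1 le_rfl) key
  · rintro ⟨a', b', c'⟩ hi hne'
    have hb' : b' = 0 := hl hi
    have hc : c ≤ c' := hmin _ hi
    split_ifs with h
    · rw [fockWeight_eq_zero_of_lt t (by grind), mul_zero]
    · rw [mul_zero]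

theorem fockCoeff_linearCombination_of_supported {l : ℕ × ℕ × ℕ →₀ ℂ}
    (hl : l ∈ Finsupp.supported ℂ ℂ {i | i.1 = 0 ∨ i.2.2 = 0}) {a c m : ℕ} (hac : a = 0 ∨ c = 0)
    (hm : l.support.sup (·.2.2) ≤ m) :
    fockCoeff t (m + c) (m + a) (Finsupp.linearCombination ℂ (discMonomial t) l) =
      (∏ j ∈ Finset.range c, (1 - (t : ℂ) ^ (m + c - j))) *
        ∑ i ∈ l.support with i.1 = a ∧ i.2.2 = c, l i * (1 - (t : ℂ) ^ m) ^ i.2.1 := by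
  rw [fockCoeff_linearCombination, Finset.mul_sum, Finset.sum_filter]
  refine Finset.sum_congr rfl fun i hi => ?_
  have hle : i.2.2 ≤ m := (Finset.le_sup (f := (·.2.2)) hi).trans hm
  have hi' : i.1 = 0 ∨ i.2.2 = 0 := hl hi
  by_cases h : i.1 = a ∧ i.2.2 = c
  · rw [if_pos (by omega), if_pos h, fockWeight, h.2, Nat.add_sub_cancel]
    ring
  · rw [if_neg (by omega), if_neg h, mul_zero]

/-- By `fockCoeff_linearCombination_of_supported`, the coefficients of the terms
`x^a (x x*)^b x*^c` (fixed `a`, `c`) of a vanishing combination are those of a polynomial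
vanishing at every `1 - t^m` with `m` large. -/
theorem linearIndepOn_discMonomial_first_or_last_zero (ht0 : 0 < t) (ht1 : t < 1) :
    LinearIndepOn ℂ (discMonomial t) {i | i.1 = 0 ∨ i.2.2 = 0} := by
  rw [linearIndepOn_iff]
  intro l hl hsum
  ext ⟨a, b, c⟩
  by_cases hac : a = 0 ∨ c = 0
  swap
  · exact Finsupp.notMem_support_iff.mp fun h => hac (hl h)
  set s := l.support.filter fun i => i.1 = a ∧ i.2.2 = c
  set P : Polynomial ℂ := ∑ i ∈ s, Polynomial.C (l i) * Polynomial.X ^ i.2.1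
  have hP : P = 0 := by
    refine Polynomial.eq_zero_of_eval_one_sub_pow_eq_zero ht0 ht1 (l.support.sup (·.2.2))
      fun m hm => ?_
    have key := congrArg (fockCoeff t (m + c) (m + a)) hsum
    rw [fockCoeff_linearCombination_of_supported hl hac hm, map_zero] at key
    simpa [P, Polynomial.eval_finsetSum,
      prod_one_sub_pow_ne_zero ht0 ht1 (Nat.le_add_left c m)] using key
  have hcoeff : P.coeff b = l (a, b, c) := by
    simp only [P, Polynomial.finsetSum_coeff, Polynomial.coeff_C_mul_X_pow]
    rw [Finset.sum_eq_single (a, b, c)]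
    · simp
    · rintro ⟨a', b', c'⟩ hi hne
      simp only [s, Finset.mem_filter] at hi
      rw [if_neg (by grind)]
    · intro h
      simpa [s] using h
  rw [← hcoeff, hP, Polynomial.coeff_zero, Finsupp.coe_zero, Pi.zero_apply]

theorem span_laurentMonomial_sup_eq_top {J : Submodule ℂ (QDisc t)}
    (hJ : ∀ u, u * (1 - xq t * xsq t) ∈ J) (hJmul : ∀ k ∈ J, ∀ v, k * v ∈ J) :
    Submodule.span ℂ (Set.range (laurentMonomial t)) ⊔ J = ⊤ := by
  set S := Submodule.span ℂ (Set.range (laurentMonomial t))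
  have hS : ∀ {z}, z ∈ Set.range (laurentMonomial t) → z ∈ S ⊔ J :=
    fun hz => Submodule.mem_sup_left (Submodule.subset_span hz)
  refine Submodule.eq_top_of_one_mem_of_mul_mem (adjoin_eq_top t) (hS ⟨0, pow_zero _⟩) ?_
  rintro _ hm a ha
  obtain ⟨s, hs, k, hk, rfl⟩ := Submodule.mem_sup.mp hm
  rw [add_mul]
  refine add_mem ?_ (Submodule.mem_sup_right (hJmul k hk a))
  suffices h : ∀ z ∈ Set.range (laurentMonomial t), 1 * z * a ∈ S ⊔ J by
    simpa using Submodule.mul_mul_mem_of_mem_span h hs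
  rintro _ ⟨n, rfl⟩
  rw [one_mul]
  rcases ha with rfl | rfl <;> rcases n with m | m
  · exact hS ⟨.ofNat (m + 1), pow_succ _ _⟩
  · have : laurentMonomial t (.negSucc m) * xq t =
        xsq t ^ m - (t : ℂ) • (xsq t ^ m * (1 - xq t * xsq t)) := by
      rw [laurentMonomial, pow_succ, mul_assoc, xsq_mul_xq]
      simp only [mul_add, mul_smul_comm, mul_sub, mul_one]
      module
    rw [this]
    exact sub_mem (hS (xsq_pow_mem_range t m))
      (Submodule.smul_mem _ _ (Submodule.mem_sup_right (hJ _)))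
  · rcases m with _ | m
    · exact hS ⟨.negSucc 0, by simp [laurentMonomial]⟩
    · have : laurentMonomial t (.ofNat (m + 1)) * xsq t =
          xq t ^ m - xq t ^ m * (1 - xq t * xsq t) := by
        rw [laurentMonomial, pow_succ, mul_assoc, mul_sub, mul_one, sub_sub_cancel]
      rw [this]
      exact sub_mem (hS ⟨.ofNat m, rfl⟩) (Submodule.mem_sup_right (hJ _))
  · exact hS ⟨.negSucc (m + 1), pow_succ _ (m + 1)⟩

theorem ker_toLinearMap_le {φ : QDisc t →ₐ[ℂ] LaurentPolynomial ℂ} (h1 : φ (xq t) = T 1)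
    (h2 : φ (xsq t) = T (-1)) {J : Submodule ℂ (QDisc t)}
    (hJ : ∀ u, u * (1 - xq t * xsq t) ∈ J) (hJmul : ∀ k ∈ J, ∀ v, k * v ∈ J)
    (hJφ : J ≤ LinearMap.ker φ.toLinearMap) :
    LinearMap.ker φ.toLinearMap ≤ J := by
  intro g hg
  have hg' : g ∈ Submodule.span ℂ (Set.range (laurentMonomial t)) ⊔ J := by
    rw [span_laurentMonomial_sup_eq_top hJ hJmul]
    trivial
  obtain ⟨s, hs, k, hk, rfl⟩ := Submodule.mem_sup.mp hg'
  have hT : LinearIndependent ℂ (φ.toLinearMap ∘ laurentMonomial t) := by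
    convert (AddMonoidAlgebra.basis ℤ ℂ).linearIndependent using 1
    funext n
    exact map_laurentMonomial t φ h1 h2 n
  have hs0 : s = 0 := by
    refine Submodule.disjoint_def.mp (Submodule.range_ker_disjoint hT) s hs ?_
    simpa [show φ k = 0 from hJφ hk] using hg
  simpa [hs0] using hk

end QDisc

namespace QSphere

open QDisc LaurentPolynomial

variable (p q : ℝ)

theorem fm1_mul_f1 : fm1 p q * f1 p q =
    (q : ℂ) • (f1 p q * fm1 p q) + ((p : ℂ) - q) • f0 p q + (1 - (p : ℂ)) • 1 := by
  simpa only [map_mul, map_add, map_smul, map_one, f0, f1, fm1] using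
    RingQuot.mkAlgHom_rel ℂ (sphereRel.rel1 (p := p) (q := q))

theorem f0_mul_f1 : f0 p q * f1 p q = (p : ℂ) • (f1 p q * f0 p q) + (1 - (p : ℂ)) • f1 p q := by
  simpa only [map_mul, map_add, map_smul, f0, f1] using
    RingQuot.mkAlgHom_rel ℂ (sphereRel.rel2 (p := p) (q := q))

theorem fm1_mul_f0 :
    fm1 p q * f0 p q = (p : ℂ) • (f0 p q * fm1 p q) + (1 - (p : ℂ)) • fm1 p q := by
  simpa only [map_mul, map_add, map_smul, f0, fm1] using
    RingQuot.mkAlgHom_rel ℂ (sphereRel.rel3 (p := p) (q := q))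

theorem one_sub_f0_mul : (1 - f0 p q) * (f1 p q * fm1 p q - f0 p q) = 0 := by
  simpa only [map_mul, map_sub, map_one, map_zero, f0, f1, fm1] using
    RingQuot.mkAlgHom_rel ℂ (sphereRel.rel4 (p := p) (q := q))

theorem adjoin_eq_top : Algebra.adjoin ℂ {f1 p q, fm1 p q, f0 p q} = ⊤ := by
  convert RingQuot.adjoin_range_mkAlgHom_ι (R := ℂ) (sphereRel p q)
  ext
  simp [Fin.exists_fin_succ, f1, fm1, f0, F1, Fm1, F0, eq_comm]

theorem f0_pow_mul_f1 (b : ℕ) :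
    f0 p q ^ b * f1 p q = f1 p q * ((p : ℂ) • f0 p q + (1 - (p : ℂ)) • 1) ^ b := by
  refine (SemiconjBy.pow_right ?_ b).symm
  rw [SemiconjBy, f0_mul_f1, mul_add, mul_smul_comm, mul_smul_comm, mul_one]

theorem f0_pow_mul_fm1 (hp : (p : ℂ) ≠ 0) (b : ℕ) :
    f0 p q ^ b * fm1 p q = fm1 p q * ((p : ℂ)⁻¹ • (f0 p q - (1 - (p : ℂ)) • 1)) ^ b := by
  refine (SemiconjBy.pow_right ?_ b).symm
  rw [SemiconjBy, mul_smul_comm, mul_sub, fm1_mul_f0, mul_smul_comm, mul_one, add_sub_cancel_right,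
    smul_smul, inv_mul_cancel₀ hp, one_smul]

theorem fm1_pow_mul_f0 (c : ℕ) : fm1 p q ^ c * f0 p q =
    ((p : ℂ) ^ c • f0 p q + (1 - (p : ℂ) ^ c) • 1) * fm1 p q ^ c := by
  induction c with
  | zero => simp
  | succ c ih =>
    rw [pow_succ', mul_assoc, ih, ← mul_assoc, mul_add, mul_smul_comm, mul_smul_comm, mul_one,
      fm1_mul_f0]
    simp only [add_mul, smul_add, smul_mul_assoc, smul_smul, mul_assoc, one_mul, ← pow_succ']
    match_scalars <;> ring

/-- `f₀` commutes with `f₁ f₋₁`, so the relation `(1 - f₀)(f₁ f₋₁ - f₀) = 0` makes `f₀` act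
trivially on `f₁ f₋₁ - f₀`. -/
theorem f1_mul_fm1_sub_f0_mul_f0_pow (j : ℕ) :
    (f1 p q * fm1 p q - f0 p q) * f0 p q ^ j = f1 p q * fm1 p q - f0 p q := by
  have hcomm : f0 p q * (f1 p q * fm1 p q) = f1 p q * fm1 p q * f0 p q := by
    rw [← mul_assoc, f0_mul_f1, mul_assoc (f1 p q), fm1_mul_f0]
    simp only [add_mul, mul_add, smul_mul_assoc, mul_smul_comm, mul_assoc]
  have hstep : (f1 p q * fm1 p q - f0 p q) * f0 p q = f1 p q * fm1 p q - f0 p q := by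
    calc (f1 p q * fm1 p q - f0 p q) * f0 p q = f0 p q * (f1 p q * fm1 p q - f0 p q) := by
          rw [sub_mul, mul_sub, hcomm]
      _ = (f1 p q * fm1 p q - f0 p q) - (1 - f0 p q) * (f1 p q * fm1 p q - f0 p q) := by
          rw [sub_mul, one_mul, sub_sub_cancel]
      _ = f1 p q * fm1 p q - f0 p q := by rw [one_sub_f0_mul, sub_zero]
  induction j with
  | zero => rw [pow_zero, mul_one]
  | succ j ih => rw [pow_succ, ← mul_assoc, ih, hstep]

def sphereMonomial (i : ℕ × ℕ × ℕ) : QSphere p q :=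
  f1 p q ^ i.1 * f0 p q ^ i.2.1 * fm1 p q ^ i.2.2

def normalSpan : Submodule ℂ (QSphere p q) :=
  Submodule.span ℂ (sphereMonomial p q '' {i | i.2.1 = 0 ∨ i.1 = 0 ∨ i.2.2 = 0})

variable {p q}

theorem sphereMonomial_mem_normalSpan_of {i : ℕ × ℕ × ℕ} (hi : i.2.1 = 0 ∨ i.1 = 0 ∨ i.2.2 = 0) :
    sphereMonomial p q i ∈ normalSpan p q :=
  Submodule.subset_span ⟨i, hi, rfl⟩

/-- `f₁^(a+1) f₀^b f₋₁^(c+1) = f₁^(a+1) f₋₁ τ^b f₋₁^c` with `τ` a polynomial in `f₀`, and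
`f₁ f₋₁ f₀^j = f₁ f₋₁ - f₀ + f₀^(j+1)` lowers the power of `f₁`. -/
theorem sphereMonomial_mem_normalSpan (hp : (p : ℂ) ≠ 0) (i : ℕ × ℕ × ℕ) :
    sphereMonomial p q i ∈ normalSpan p q := by
  obtain ⟨a, b, c⟩ := i
  induction a generalizing b c with
  | zero => exact sphereMonomial_mem_normalSpan_of (Or.inr (Or.inl rfl))
  | succ a ih =>
    rcases c with _ | c
    · exact sphereMonomial_mem_normalSpan_of (Or.inr (Or.inr rfl))
    have hτ : ((p : ℂ)⁻¹ • (f0 p q - (1 - (p : ℂ)) • 1)) ^ b ∈ Algebra.adjoin ℂ {f0 p q} := by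
      have h0 := Algebra.self_mem_adjoin_singleton ℂ (f0 p q)
      exact pow_mem (Subalgebra.smul_mem _ (sub_mem h0 (Subalgebra.smul_mem _ (one_mem _) _)) _) _
    have hmono : sphereMonomial p q (a + 1, b, c + 1) =
        f1 p q ^ (a + 1) * fm1 p q * ((p : ℂ)⁻¹ • (f0 p q - (1 - (p : ℂ)) • 1)) ^ b *
          fm1 p q ^ c := by
      rw [sphereMonomial, pow_succ' (fm1 p q), ← mul_assoc, mul_assoc _ (f0 p q ^ b),
        f0_pow_mul_fm1 p q hp, ← mul_assoc]
    rw [hmono]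
    refine Submodule.mul_mul_mem_of_mem_span ?_
      (Algebra.mem_span_range_pow_of_mem_adjoin_singleton hτ)
    rintro _ ⟨j, rfl⟩
    have hj : f1 p q ^ (a + 1) * fm1 p q * f0 p q ^ j * fm1 p q ^ c =
        sphereMonomial p q (a + 1, 0, c + 1) - sphereMonomial p q (a, 1, c) +
          sphereMonomial p q (a, j + 1, c) := by
      have h := f1_mul_fm1_sub_f0_mul_f0_pow p q j
      rw [sub_mul, sub_eq_iff_eq_add, ← pow_succ'] at h
      calc f1 p q ^ (a + 1) * fm1 p q * f0 p q ^ j * fm1 p q ^ c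
          = f1 p q ^ a * (f1 p q * fm1 p q * f0 p q ^ j) * fm1 p q ^ c := by
            simp only [pow_succ, mul_assoc]
        _ = _ := by
            rw [h, sphereMonomial, sphereMonomial, sphereMonomial, pow_succ (f1 p q) a,
              pow_succ' (fm1 p q) c]
            simp only [pow_zero, pow_one, mul_one, mul_add, add_mul, mul_sub, sub_mul, mul_assoc]
    rw [hj]
    exact add_mem (sub_mem (sphereMonomial_mem_normalSpan_of (Or.inl rfl)) (ih _ _)) (ih _ _)

theorem mul_mem_normalSpan {a : QSphere p q}
    (h : ∀ i, sphereMonomial p q i * a ∈ normalSpan p q) {z : QSphere p q}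
    (hz : z ∈ normalSpan p q) : z * a ∈ normalSpan p q := by
  refine one_mul z ▸ Submodule.mul_mul_mem_of_mem_span ?_ hz
  rintro _ ⟨i, -, rfl⟩
  simpa using h i

theorem sphereMonomial_mul_fm1_mem (hp : (p : ℂ) ≠ 0) (i : ℕ × ℕ × ℕ) :
    sphereMonomial p q i * fm1 p q ∈ normalSpan p q := by
  rw [sphereMonomial, mul_assoc, ← pow_succ]
  exact sphereMonomial_mem_normalSpan hp (i.1, i.2.1, i.2.2 + 1)

theorem sphereMonomial_mul_f0_mem (hp : (p : ℂ) ≠ 0) (i : ℕ × ℕ × ℕ) :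
    sphereMonomial p q i * f0 p q ∈ normalSpan p q := by
  have h : sphereMonomial p q i * f0 p q =
      (p : ℂ) ^ i.2.2 • sphereMonomial p q (i.1, i.2.1 + 1, i.2.2) +
        (1 - (p : ℂ) ^ i.2.2) • sphereMonomial p q i := by
    simp only [sphereMonomial, mul_assoc, fm1_pow_mul_f0, add_mul, mul_add, smul_mul_assoc,
      mul_smul_comm, one_mul, pow_succ]
  rw [h]
  exact add_mem (Submodule.smul_mem _ _ (sphereMonomial_mem_normalSpan hp _))
    (Submodule.smul_mem _ _ (sphereMonomial_mem_normalSpan hp _))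

theorem sphereMonomial_mul_f1_mem (hp : (p : ℂ) ≠ 0) (i : ℕ × ℕ × ℕ) :
    sphereMonomial p q i * f1 p q ∈ normalSpan p q := by
  obtain ⟨a, b, c⟩ := i
  induction c with
  | zero =>
    have h : sphereMonomial p q (a, b, 0) * f1 p q =
        f1 p q ^ (a + 1) * ((p : ℂ) • f0 p q + (1 - (p : ℂ)) • 1) ^ b * 1 := by
      rw [sphereMonomial, pow_zero, mul_one, mul_assoc, f0_pow_mul_f1, ← mul_assoc, ← pow_succ,
        mul_one]
    have hσ : ((p : ℂ) • f0 p q + (1 - (p : ℂ)) • 1) ^ b ∈ Algebra.adjoin ℂ {f0 p q} := by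
      have h0 := Algebra.self_mem_adjoin_singleton ℂ (f0 p q)
      exact pow_mem (add_mem (Subalgebra.smul_mem _ h0 _) (Subalgebra.smul_mem _ (one_mem _) _)) _
    rw [h]
    refine Submodule.mul_mul_mem_of_mem_span ?_
      (Algebra.mem_span_range_pow_of_mem_adjoin_singleton hσ)
    rintro _ ⟨j, rfl⟩
    simpa [sphereMonomial] using
      sphereMonomial_mem_normalSpan_of (p := p) (q := q) (i := (a + 1, j, 0)) (Or.inr (Or.inr rfl))
  | succ c ih =>
    have h : sphereMonomial p q (a, b, c + 1) * f1 p q =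
        (q : ℂ) • (sphereMonomial p q (a, b, c) * f1 p q * fm1 p q) +
          ((p : ℂ) - q) • (sphereMonomial p q (a, b, c) * f0 p q) +
          (1 - (p : ℂ)) • sphereMonomial p q (a, b, c) := by
      simp only [sphereMonomial, pow_succ, mul_assoc, fm1_mul_f1, mul_add, mul_smul_comm, mul_one]
    rw [h]
    refine add_mem (add_mem ?_ ?_) ?_ <;> refine Submodule.smul_mem _ _ ?_
    exacts [mul_mem_normalSpan (sphereMonomial_mul_fm1_mem hp) ih,
      sphereMonomial_mul_f0_mem hp _, sphereMonomial_mem_normalSpan hp _]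

theorem normalSpan_eq_top (hp : (p : ℂ) ≠ 0) : normalSpan p q = ⊤ := by
  refine Submodule.eq_top_of_one_mem_of_mul_mem (adjoin_eq_top p q) ?_ ?_
  · simpa [sphereMonomial] using
      sphereMonomial_mem_normalSpan_of (p := p) (q := q) (i := (0, 0, 0)) (Or.inl rfl)
  · rintro z hz _ (rfl | rfl | rfl)
    exacts [mul_mem_normalSpan (sphereMonomial_mul_f1_mem hp) hz,
      mul_mem_normalSpan (sphereMonomial_mul_fm1_mem hp) hz,
      mul_mem_normalSpan (sphereMonomial_mul_f0_mem hp) hz]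

theorem map_sphereMonomial {F : QSphere p q →ₐ[ℂ] QDisc p × QDisc q}
    (hF1 : F (f1 p q) = (xq p, xq q)) (hFm1 : F (fm1 p q) = (xsq p, xsq q))
    (hF0 : F (f0 p q) = (xq p * xsq p, 1)) (i : ℕ × ℕ × ℕ) :
    F (sphereMonomial p q i) = (discMonomial p i, discMonomial q (i.1, 0, i.2.2)) := by
  simp [sphereMonomial, discMonomial, hF1, hFm1, hF0]

theorem span_sphereMonomial_sup_eq_top (hp : (p : ℂ) ≠ 0) :
    Submodule.span ℂ (sphereMonomial p q '' {i | 0 < i.1 ∧ i.2.1 = 0 ∧ 0 < i.2.2}) ⊔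
      Submodule.span ℂ (sphereMonomial p q '' {i | i.1 = 0 ∨ i.2.2 = 0}) = ⊤ := by
  rw [← Submodule.span_union, ← Set.image_union, ← normalSpan_eq_top hp, normalSpan]
  congr 2
  ext ⟨a, b, c⟩
  simp only [Set.mem_union, Set.mem_ofPred_eq]
  omega

/-- The normal monomials with `a, c > 0` (hence `b = 0`) are detected by the second factor, those
with `a = 0` or `c = 0` by the first. -/
theorem injective_of_map_generators (hp0 : 0 < p) (hp1 : p < 1) (hq0 : 0 < q) (hq1 : q < 1)
    {F : QSphere p q →ₐ[ℂ] QDisc p × QDisc q}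
    (hF1 : F (f1 p q) = (xq p, xq q)) (hFm1 : F (fm1 p q) = (xsq p, xsq q))
    (hF0 : F (f0 p q) = (xq p * xsq p, 1)) : Function.Injective F := by
  set f := ((AlgHom.fst ℂ _ _).comp F).toLinearMap
  set g := ((AlgHom.snd ℂ _ _).comp F).toLinearMap
  have hf : f ∘ sphereMonomial p q = discMonomial p := by
    ext1 i; simp [f, map_sphereMonomial hF1 hFm1 hF0]
  have hg : ∀ i : ℕ × ℕ × ℕ, g (sphereMonomial p q i) = discMonomial q (i.1, 0, i.2.2) := by
    intro i; simp [g, map_sphereMonomial hF1 hFm1 hF0]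
  set S : Set (ℕ × ℕ × ℕ) := {i | 0 < i.1 ∧ i.2.1 = 0 ∧ 0 < i.2.2}
  have hgS : Set.EqOn (g ∘ sphereMonomial p q) (discMonomial q) S := by
    rintro ⟨a, b, c⟩ ⟨-, rfl : b = 0, -⟩
    exact hg _
  have hindep := linearIndepOn_discMonomial_middle_zero hq0 hq1
  have hker : LinearMap.ker f ⊓ LinearMap.ker g = ⊥ := by
    refine LinearMap.ker_inf_ker_eq_bot_of_sup_eq_top
      (span_sphereMonomial_sup_eq_top (Complex.ofReal_ne_zero.mpr hp0.ne')) ?_ ?_ ?_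
    · exact Submodule.disjoint_span_image_ker ((hindep.mono fun i hi => hi.2.1).congr hgS.symm)
    · rw [Submodule.map_span, Submodule.map_span, ← Set.image_comp, ← Set.image_comp,
        hgS.image_eq]
      refine ((linearIndepOn_union_iff (t := {i | i.2.1 = 0 ∧ (i.1 = 0 ∨ i.2.2 = 0)}) ?_).mp
        (hindep.mono ?_)).2.2.mono_right (Submodule.span_mono ?_)
      · rw [Set.disjoint_left]
        rintro ⟨a, b, c⟩ ⟨ha, -, hc⟩ ⟨-, h⟩
        omega
      · rintro i (⟨-, h, -⟩ | ⟨h, -⟩) <;> exact h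
      · rintro _ ⟨i, hi, rfl⟩
        exact ⟨(i.1, 0, i.2.2), ⟨rfl, hi⟩, (hg i).symm⟩
    · refine Submodule.disjoint_span_image_ker ?_
      rw [hf]
      exact linearIndepOn_discMonomial_first_or_last_zero hp0 hp1
  rw [injective_iff_map_eq_zero]
  intro z hz
  have hz' : z ∈ LinearMap.ker f ⊓ LinearMap.ker g := by
    simp [f, g, hz]
  simpa [hker] using hz'

theorem fst_comp_surjective {F : QSphere p q →ₐ[ℂ] QDisc p × QDisc q}
    (hF1 : F (f1 p q) = (xq p, xq q)) (hFm1 : F (fm1 p q) = (xsq p, xsq q)) :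
    Function.Surjective ((AlgHom.fst ℂ _ _).comp F) := by
  refine AlgHom.surjective_of_adjoin_eq_top (QDisc.adjoin_eq_top p) _ ?_
  rintro _ (rfl | rfl)
  exacts [⟨f1 p q, by simp [hF1]⟩, ⟨fm1 p q, by simp [hFm1]⟩]

theorem snd_comp_surjective {F : QSphere p q →ₐ[ℂ] QDisc p × QDisc q}
    (hF1 : F (f1 p q) = (xq p, xq q)) (hFm1 : F (fm1 p q) = (xsq p, xsq q)) :
    Function.Surjective ((AlgHom.snd ℂ _ _).comp F) := by
  refine AlgHom.surjective_of_adjoin_eq_top (QDisc.adjoin_eq_top q) _ ?_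
  rintro _ (rfl | rfl)
  exacts [⟨f1 p q, by simp [hF1]⟩, ⟨fm1 p q, by simp [hFm1]⟩]

theorem map_fst_eq_map_snd {φp : QDisc p →ₐ[ℂ] LaurentPolynomial ℂ}
    (hφp1 : φp (xq p) = T 1) (hφp2 : φp (xsq p) = T (-1))
    {φq : QDisc q →ₐ[ℂ] LaurentPolynomial ℂ} (hφq1 : φq (xq q) = T 1)
    (hφq2 : φq (xsq q) = T (-1)) {F : QSphere p q →ₐ[ℂ] QDisc p × QDisc q}
    (hF1 : F (f1 p q) = (xq p, xq q)) (hFm1 : F (fm1 p q) = (xsq p, xsq q))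
    (hF0 : F (f0 p q) = (xq p * xsq p, 1)) (z : QSphere p q) : φp (F z).1 = φq (F z).2 := by
  have : φp.comp ((AlgHom.fst ℂ _ _).comp F) = φq.comp ((AlgHom.snd ℂ _ _).comp F) := by
    refine AlgHom.ext_of_adjoin_eq_top (adjoin_eq_top p q) ?_
    rintro _ (rfl | rfl | rfl)
    · simp [hF1, hφp1, hφq1]
    · simp [hFm1, hφp2, hφq2]
    · simp only [AlgHom.comp_apply, hF0, AlgHom.fst_apply, AlgHom.snd_apply, map_mul, map_one,
        hφp1, hφp2]
      rw [← T_add, add_neg_cancel, T_zero]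
  exact DFunLike.congr_fun this z

/-- As `F (f₀ - f₁ f₋₁) = (0, 1 - y y*)` and `F` is onto in the second factor, the `k` with
`(0, k) ∈ range F` form a subspace to which `QDisc.ker_toLinearMap_le` applies. -/
theorem zero_mk_mem_range {φp : QDisc p →ₐ[ℂ] LaurentPolynomial ℂ}
    (hφp1 : φp (xq p) = T 1) (hφp2 : φp (xsq p) = T (-1))
    {φq : QDisc q →ₐ[ℂ] LaurentPolynomial ℂ} (hφq1 : φq (xq q) = T 1)
    (hφq2 : φq (xsq q) = T (-1)) {F : QSphere p q →ₐ[ℂ] QDisc p × QDisc q}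
    (hF1 : F (f1 p q) = (xq p, xq q)) (hFm1 : F (fm1 p q) = (xsq p, xsq q))
    (hF0 : F (f0 p q) = (xq p * xsq p, 1)) {k : QDisc q} (hk : φq k = 0) :
    (0, k) ∈ Set.range F := by
  have hsnd := snd_comp_surjective hF1 hFm1
  let J := (LinearMap.range F.toLinearMap).comap (LinearMap.inr ℂ (QDisc p) (QDisc q))
  have hJ : ∀ u, u * (1 - xq q * xsq q) ∈ J := by
    intro u
    obtain ⟨z, rfl⟩ := hsnd u
    refine ⟨z * (f0 p q - f1 p q * fm1 p q), Prod.ext ?_ ?_⟩ <;> simp [hF1, hFm1, hF0]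
  have hJmul : ∀ k ∈ J, ∀ v, k * v ∈ J := by
    rintro k ⟨w, hw⟩ v
    obtain ⟨z, rfl⟩ := hsnd v
    simp only [AlgHom.toLinearMap_apply, LinearMap.inr_apply] at hw
    refine ⟨w * z, Prod.ext ?_ ?_⟩ <;> simp [hw]
  have hJφ : J ≤ LinearMap.ker φq.toLinearMap := by
    rintro k ⟨w, hw⟩
    simp only [AlgHom.toLinearMap_apply, LinearMap.inr_apply] at hw
    simpa [hw] using (map_fst_eq_map_snd hφp1 hφp2 hφq1 hφq2 hF1 hFm1 hF0 w).symm
  exact QDisc.ker_toLinearMap_le hφq1 hφq2 hJ hJmul hJφ hk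

theorem range_eq_of_map_generators {φp : QDisc p →ₐ[ℂ] LaurentPolynomial ℂ}
    (hφp1 : φp (xq p) = T 1) (hφp2 : φp (xsq p) = T (-1))
    {φq : QDisc q →ₐ[ℂ] LaurentPolynomial ℂ} (hφq1 : φq (xq q) = T 1)
    (hφq2 : φq (xsq q) = T (-1)) {F : QSphere p q →ₐ[ℂ] QDisc p × QDisc q}
    (hF1 : F (f1 p q) = (xq p, xq q)) (hFm1 : F (fm1 p q) = (xsq p, xsq q))
    (hF0 : F (f0 p q) = (xq p * xsq p, 1)) :
    Set.range F = {fg : QDisc p × QDisc q | φp fg.1 = φq fg.2} := by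
  have hφ := map_fst_eq_map_snd hφp1 hφp2 hφq1 hφq2 hF1 hFm1 hF0
  ext ⟨f, g⟩
  refine ⟨fun ⟨z, hz⟩ => hz ▸ hφ z, fun hfg => ?_⟩
  obtain ⟨z, hz⟩ := fst_comp_surjective hF1 hFm1 f
  replace hz : (F z).1 = f := hz
  obtain ⟨w, hw⟩ := zero_mk_mem_range hφp1 hφp2 hφq1 hφq2 hF1 hFm1 hF0 (k := g - (F z).2)
    (by rw [map_sub, ← hφ z, hz, hfg, sub_self])
  exact ⟨z + w, by rw [map_add, hw, Prod.mk_add_mk, add_zero, hz, add_sub_cancel]⟩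

end QSphere

/-- The canonical map F : P(S²_{pqφ}) → P(D_p) × P(D_q) (sending f₁ to
(x, y), f₋₁ to (x*, y*) and f₀ to (x x*, 1)) is injective, and its image is the fibered
product P(D_p) ⊕_φ P(D_q) = {(f, g) : φ_p(f) = φ_q(g)}, where φ_p, φ_q are the
homomorphisms to the Laurent polynomial algebra ℂ[a, a⁻¹] sending the disc generators to
a and a⁻¹.  In particular P(S²_{pqφ}) ≅ P(D_p) ⊕_φ P(D_q). -/
theorem sphere_iso_glued_discs (p q : ℝ) (hp0 : 0 < p) (hp1 : p < 1)
    (hq0 : 0 < q) (hq1 : q < 1)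
    (φp : QDisc p →ₐ[ℂ] LaurentPolynomial ℂ)
    (hφp1 : φp (xq p) = LaurentPolynomial.T 1)
    (hφp2 : φp (xsq p) = LaurentPolynomial.T (-1))
    (φq : QDisc q →ₐ[ℂ] LaurentPolynomial ℂ)
    (hφq1 : φq (xq q) = LaurentPolynomial.T 1)
    (hφq2 : φq (xsq q) = LaurentPolynomial.T (-1))
    (F : QSphere p q →ₐ[ℂ] QDisc p × QDisc q)
    (hF1 : F (f1 p q) = (xq p, xq q))
    (hFm1 : F (fm1 p q) = (xsq p, xsq q))
    (hF0 : F (f0 p q) = (xq p * xsq p, 1)) :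
    Function.Injective F ∧
    Set.range F = {fg : QDisc p × QDisc q | φp fg.1 = φq fg.2} :=
  ⟨QSphere.injective_of_map_generators hp0 hp1 hq0 hq1 hF1 hFm1 hF0,
    QSphere.range_eq_of_map_generators hφp1 hφp2 hφq1 hφq2 hF1 hFm1 hF0⟩
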